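/- If B and B' are maximal cubes of an ample concept class C (maximal under inclusion among cubes of C) and B and B' have the same support, then B = B'. -/

import Mathlib

variable {X : Type} [Fintype X] [DecidableEq X]

/-- Hamming distance between two subsets of `X` (size of symmetric difference). -/
def hdist (c c' : Finset X) : ℕ := ((c \ c') ∪ (c' \ c)).card

/-- The restriction `C|Y = {c ∩ Y : c ∈ C}`. -/
def restrictTo (C : Finset (Finset X)) (Y : Finset X) : Finset (Finset X) :=
  C.image (· ∩ Y)

/-- `Y` is shattered by `C`, i.e. `C|Y = 2^Y`. -/
def Shatters (C : Finset (Finset X)) (Y : Finset X) : Prop :=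
  ∀ s ∈ Y.powerset, ∃ c ∈ C, c ∩ Y = s

instance (C : Finset (Finset X)) : DecidablePred (Shatters C) := fun _ => by
  unfold Shatters; infer_instance

/-- The family `X̄(C)` of all sets shattered by `C`. -/
def shatteredSets (C : Finset (Finset X)) : Finset (Finset X) :=
  Finset.univ.filter (Shatters C)

/-- The VC dimension of `C`: maximum size of a shattered set. -/
def vcDim (C : Finset (Finset X)) : ℕ := (shatteredSets C).sup Finset.card

/-- `C` is ample: `|C| = |X̄(C)|`. -/
def IsAmple (C : Finset (Finset X)) : Prop := C.card = (shatteredSets C).card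

/-- `C` is a maximum class of VC dimension `d`. -/
def IsMaximumClass (C : Finset (Finset X)) (d : ℕ) : Prop :=
  vcDim C = d ∧ C.card = ∑ i ∈ Finset.range (d + 1), (Fintype.card X).choose i

/-- `B` is a cube with support `Y`: `B = {t ∪ s : s ⊆ Y}` for some `t ⊆ X \ Y`. -/
def IsCubeS (B : Finset (Finset X)) (Y : Finset X) : Prop :=
  ∃ t : Finset X, t ∩ Y = ∅ ∧ B = Y.powerset.image (fun s => t ∪ s)

/-- `B` is a cube. -/
def IsCube (B : Finset (Finset X)) : Prop := ∃ Y, IsCubeS B Y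

/-- `B` is a cube of `C`: a cube contained in `C`. -/
def IsCubeOf (C B : Finset (Finset X)) : Prop := B ⊆ C ∧ IsCube B

/-- `B` is a maximal cube of `C` (maximal under inclusion among cubes of `C`). -/
def IsMaximalCubeOf (C B : Finset (Finset X)) : Prop :=
  IsCubeOf C B ∧ ∀ B', IsCubeOf C B' → B ⊆ B' → B = B'

/-- `c` is a corner of `C`: a concept of `C` belonging to a unique maximal cube of `C`. -/
def IsCornerOf (C : Finset (Finset X)) (c : Finset X) : Prop :=
  c ∈ C ∧ ∃! B, IsMaximalCubeOf C B ∧ c ∈ B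

/-- The one-inclusion graph `G(C)`. -/
def oneInclusionGraph (C : Finset (Finset X)) : SimpleGraph {c : Finset X // c ∈ C} where
  Adj c c' := hdist c.1 c'.1 = 1
  symm := by
    refine ⟨?_⟩
    intro a b h
    simpa [hdist, Finset.union_comm] using h
  loopless := by
    refine ⟨?_⟩
    intro a h
    simp [hdist] at h

/-- `C` is isometric: `G(C)` is connected and graph distances equal Hamming distances. -/
def IsIsometric (C : Finset (Finset X)) : Prop :=
  (oneInclusionGraph C).Connected ∧
  ∀ c c' : {c : Finset X // c ∈ C}, (oneInclusionGraph C).dist c c' = hdist c.1 c'.1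

/-- `C` is weakly isometric: `G(C)` is connected and graph distances equal Hamming
distances for pairs at Hamming distance at most 2. -/
def IsWeaklyIsometric (C : Finset (Finset X)) : Prop :=
  (oneInclusionGraph C).Connected ∧
  ∀ c c' : {c : Finset X // c ∈ C}, hdist c.1 c'.1 ≤ 2 →
    (oneInclusionGraph C).dist c c' = hdist c.1 c'.1

/-- A list of concepts is a corner peeling if it has no duplicates and each element is a
corner of the corresponding level set. -/
def IsCornerPeeling (l : List (Finset X)) : Prop :=
  l.Nodup ∧ ∀ i (h : i < l.length), IsCornerOf ((l.take (i + 1)).toFinset) (l.get ⟨i, h⟩)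

/-- `C` is dismantlable: it admits a corner peeling ordering of all its concepts. -/
def Dismantlable (C : Finset (Finset X)) : Prop :=
  ∃ l : List (Finset X), l.toFinset = C ∧ IsCornerPeeling l

/-- Non-clashing condition for a map `r`. -/
def NonClashing (C : Finset (Finset X)) (r : Finset X → Finset X) : Prop :=
  ∀ c ∈ C, ∀ c' ∈ C, c ≠ c' → c ∩ (r c ∪ r c') ≠ c' ∩ (r c ∪ r c')

/-- `r` is a representation map for `C`: a non-clashing bijection from `C` onto `X̄(C)`. -/
def IsRepMap (C : Finset (Finset X)) (r : Finset X → Finset X) : Prop :=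
  (∀ c ∈ C, r c ∈ shatteredSets C) ∧
  Set.InjOn r ↑C ∧
  (∀ Y ∈ shatteredSets C, ∃ c ∈ C, r c = Y) ∧
  NonClashing C r

/-- `C` admits an unlabeled sample compression scheme of size `k`. -/
def HasUSCS (C : Finset (Finset X)) (k : ℕ) : Prop :=
  ∃ (α : Finset X → Finset X → Finset X) (β : Finset X → Finset X),
    ∀ (Y : Finset X), ∀ c ∈ C,
      α Y (c ∩ Y) ⊆ Y ∧ (α Y (c ∩ Y)).card ≤ k ∧
      β (α Y (c ∩ Y)) ∈ C ∧ β (α Y (c ∩ Y)) ∩ Y = c ∩ Y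

/-- The cube of `2^X` with support `Y` containing `c`. -/
def cubeAt (c Y : Finset X) : Finset (Finset X) :=
  Y.powerset.image (fun s => (c \ Y) ∪ s)

/-- Condition (C1): for every `c ∈ C`, the cube with support `r c` containing `c`
is a cube of `C`. -/
def CondC1 (C : Finset (Finset X)) (r : Finset X → Finset X) : Prop :=
  ∀ c ∈ C, cubeAt c (r c) ⊆ C

/-- Condition (C2): every cube of `C` has a unique concept `c` with `r c ∩ supp B = ∅`. -/
def CondC2 (C : Finset (Finset X)) (r : Finset X → Finset X) : Prop :=
  ∀ B Y, B ⊆ C → IsCubeS B Y → ∃! c, c ∈ B ∧ r c ∩ Y = ∅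

/-- The facet of the cross-polytope corresponding to a subset `c ⊆ X`:
`+x ∈ σ_c` iff `x ∈ c` (where `+x = Sum.inl x` and `-x = Sum.inr x`). -/
def facet (c : Finset X) : Finset (X ⊕ X) :=
  c.image Sum.inl ∪ (Finset.univ \ c).image Sum.inr

/-- A list of facets of the cross-polytope is a partial shelling. -/
def IsPartialShelling (L : List (Finset (X ⊕ X))) : Prop :=
  L.Nodup ∧ ∀ i j, i < j → j < L.length →
    ∃ k < j, ((L.getD k ∅) ∩ (L.getD j ∅)).card = Fintype.card X - 1 ∧
      (L.getD i ∅) ∩ (L.getD j ∅) ⊆ (L.getD k ∅) ∩ (L.getD j ∅)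

/-- `Q` is an incomplete cube for `(C, D)` with support `σ`: a cube of `C` whose
support `σ` is a missed simplex (shattered by `C` but not by `D`). -/
def IsIncompleteCube (C D Q : Finset (Finset X)) (σ : Finset X) : Prop :=
  Q ⊆ C ∧ IsCubeS Q σ ∧ Shatters C σ ∧ ¬ Shatters D σ

/-- `c` is the source of the incomplete cube `Q` with support `σ`:
`c ∈ Q` and `c ∩ σ ∉ D|σ`. -/
def IsSource (D Q : Finset (Finset X)) (σ : Finset X) (c : Finset X) : Prop :=
  c ∈ Q ∧ c ∩ σ ∉ restrictTo D σ

/-- The restriction `C_x = C|(X \ {x})`, with concepts viewed as subsets of `X`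
avoiding `x`. -/
def restrictX (C : Finset (Finset X)) (x : X) : Finset (Finset X) :=
  C.image (·.erase x)

/-- The reduction `C^x = {c ⊆ X \ {x} : c ∈ C and c ∪ {x} ∈ C}`. -/
def reduction (C : Finset (Finset X)) (x : X) : Finset (Finset X) :=
  C.filter (fun c => x ∉ c ∧ insert x c ∈ C)

/-- The interval `B(c,c') = {t : d(c,t) + d(t,c') = d(c,c')}`. -/
def interval (c c' : Finset X) : Finset (Finset X) :=
  Finset.univ.filter (fun t => hdist c t + hdist t c' = hdist c c')

/-- `C'` is convex in `C`. -/
def IsConvexIn (C C' : Finset (Finset X)) : Prop :=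
  ∀ c ∈ C', ∀ c'' ∈ C', interval c c'' ∩ C ⊆ C'

/-- `C'` is locally convex in `C`. -/
def IsLocallyConvexIn (C C' : Finset (Finset X)) : Prop :=
  ∀ c ∈ C', ∀ c'' ∈ C', hdist c c'' = 2 → interval c c'' ∩ C ⊆ C'

/-- `C` is a conditional antimatroid: contains `∅`, closed under intersection, and
every concept is generated by its extremal points. -/
def IsCondAntimatroid (C : Finset (Finset X)) : Prop :=
  ∅ ∈ C ∧ (∀ c ∈ C, ∀ c' ∈ C, c ∩ c' ∈ C) ∧
  ∀ c ∈ C, ∀ c' ∈ C, (c.filter (fun x => c.erase x ∈ C)) ⊆ c' → c ⊆ c'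

/-!
Along a coordinate `a`, the sets shattered by the half `{c ∈ C | a ∈ c}`, those shattered by
`{c ∈ C | a ∉ c}`, and `insert a Z` for `Z` shattered by both, are distinct sets shattered by `C`.
Together with Pajor's inequality `#C ≤ #C.shatterer` this shows that halves of an ample class are
ample. The down-compression `𝓓 a C` of an ample class is ample too, and its upper half consists of
the tops of the `a`-edges of `C`; iterating, the tops of the `Y`-cubes of `C` form an ample class.

In an ample class every concept `t` that is not alone has a neighbour `t ∆ {x}`. If two maximal
cubes of `C` with support `Y` were different, their tops would be two elements of the ample class of
`Y`-cube tops, so the first one has a neighbour there, across some `x ∉ Y`. The two adjacent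
`Y`-cubes then make up a cube of `C` with support `insert x Y`, against maximality.
-/

open scoped FinsetFamily symmDiff

namespace Finset

variable {α : Type*} [DecidableEq α] {𝒜 : Finset (Finset α)} {s : Finset α} {a : α}

theorem Shatters.notMem_of_forall_mem_iff {p : Prop} (hs : 𝒜.Shatters s)
    (h : ∀ u ∈ 𝒜, a ∈ u ↔ p) : a ∉ s := by
  intro ha
  obtain ⟨u, hu, hsu⟩ := hs.exists_superset
  obtain ⟨v, hv, hsv⟩ := hs (empty_subset s)
  have hav : a ∈ v := (h v hv).2 ((h u hu).1 (hsu ha))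
  exact notMem_empty a (hsv ▸ mem_inter.2 ⟨ha, hav⟩)

theorem Shatters.insert_of_filter (h₁ : (𝒜.filter (a ∈ ·)).Shatters s)
    (h₀ : (𝒜.filter (a ∉ ·)).Shatters s) : 𝒜.Shatters (insert a s) := by
  intro t ht
  rw [subset_insert_iff] at ht
  by_cases ha : a ∈ t
  · obtain ⟨u, hu, hsu⟩ := h₁ ht
    rw [mem_filter] at hu
    exact ⟨u, hu.1, by rw [insert_inter_of_mem hu.2, hsu, insert_erase ha]⟩
  · rw [erase_eq_of_notMem ha] at ht
    obtain ⟨u, hu, hsu⟩ := h₀ ht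
    rw [mem_filter] at hu
    exact ⟨u, hu.1, by rw [insert_inter_of_notMem hu.2, hsu]⟩

theorem card_shatterer_filter_mem_add_card_shatterer_filter_notMem_le (𝒜 : Finset (Finset α))
    (a : α) : #(𝒜.filter (a ∈ ·)).shatterer + #(𝒜.filter (a ∉ ·)).shatterer ≤ #𝒜.shatterer := by
  set S₁ := (𝒜.filter (a ∈ ·)).shatterer
  set S₀ := (𝒜.filter (a ∉ ·)).shatterer
  have hS : ∀ s ∈ S₁ ∪ S₀, a ∉ s := by
    intro s hs
    rcases mem_union.1 hs with hs | hs
    · exact (mem_shatterer.1 hs).notMem_of_forall_mem_iff (p := True)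
        fun u hu ↦ by simpa using (mem_filter.1 hu).2
    · exact (mem_shatterer.1 hs).notMem_of_forall_mem_iff (p := False)
        fun u hu ↦ by simpa using (mem_filter.1 hu).2
  have hdisj : Disjoint (S₁ ∪ S₀) ((S₁ ∩ S₀).image (insert a)) := by
    rw [disjoint_right]
    rintro _ hs hs'
    obtain ⟨s, -, rfl⟩ := mem_image.1 hs
    exact hS _ hs' (mem_insert_self a s)
  have hinj : #((S₁ ∩ S₀).image (insert a)) = #(S₁ ∩ S₀) :=
    card_image_of_injOn fun s hs s' hs' h ↦ by
      rw [← erase_insert (hS s (mem_union_left _ (mem_inter.1 hs).1)),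
        ← erase_insert (hS s' (mem_union_left _ (mem_inter.1 hs').1))]
      exact congrArg (erase · a) h
  have hsub : S₁ ∪ S₀ ∪ (S₁ ∩ S₀).image (insert a) ⊆ 𝒜.shatterer := by
    refine union_subset (union_subset (shatterer_mono (filter_subset _ _))
      (shatterer_mono (filter_subset _ _))) ?_
    rintro _ hs'
    obtain ⟨s, hs, rfl⟩ := mem_image.1 hs'
    rw [mem_inter, mem_shatterer, mem_shatterer] at hs
    exact mem_shatterer.2 (hs.1.insert_of_filter hs.2)
  calc #S₁ + #S₀ = #(S₁ ∪ S₀) + #(S₁ ∩ S₀) := (card_union_add_card_inter _ _).symm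
    _ = #(S₁ ∪ S₀ ∪ (S₁ ∩ S₀).image (insert a)) := by rw [card_union_of_disjoint hdisj, hinj]
    _ ≤ #𝒜.shatterer := card_le_card hsub

theorem card_symmDiff_lt_card_shatterer {t t' : Finset α} (ht : t ∈ 𝒜) (ht' : t' ∈ 𝒜) :
    #(t ∆ t') < #𝒜.shatterer := by
  set 𝒮 : Finset (Finset α) := insert ∅ ((t ∆ t').image ({·}))
  have hsub : 𝒮 ⊆ 𝒜.shatterer := by
    refine insert_subset (mem_shatterer.2 (shatters_empty.2 ⟨t, ht⟩)) ?_
    rintro _ hx'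
    obtain ⟨x, hx, rfl⟩ := mem_image.1 hx'
    refine mem_shatterer.2 fun s hs ↦ ?_
    rw [mem_symmDiff] at hx
    rcases subset_singleton_iff.1 hs with rfl | rfl
    · rcases hx with ⟨-, hx⟩ | ⟨-, hx⟩
      exacts [⟨t', ht', singleton_inter_of_notMem hx⟩, ⟨t, ht, singleton_inter_of_notMem hx⟩]
    · rcases hx with ⟨hx, -⟩ | ⟨hx, -⟩
      exacts [⟨t, ht, singleton_inter_of_mem hx⟩, ⟨t', ht', singleton_inter_of_mem hx⟩]
  have hcard : #𝒮 = #(t ∆ t') + 1 := by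
    rw [card_insert_of_notMem (by simp), card_image_of_injective _ singleton_injective]
  have := card_le_card hsub
  omega

end Finset

open Finset

theorem shatteredSets_eq_shatterer (C : Finset (Finset X)) : shatteredSets C = C.shatterer := by
  ext Y
  simp only [shatteredSets, _root_.Shatters, Finset.Shatters, mem_filter, mem_univ, true_and,
    mem_shatterer, mem_powerset, inter_comm Y]

theorem isAmple_iff_card_shatterer_le {C : Finset (Finset X)} :
    IsAmple C ↔ #C.shatterer ≤ #C := by
  rw [IsAmple, shatteredSets_eq_shatterer]
  exact ⟨Eq.ge, fun h ↦ le_antisymm (card_le_card_shatterer C) h⟩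

namespace IsAmple

variable {C : Finset (Finset X)}

theorem filter_mem_iff (hC : IsAmple C) (a : X) (p : Prop) [Decidable p] :
    IsAmple (C.filter (fun c ↦ a ∈ c ↔ p)) := by
  have hsplit := card_filter_add_card_filter_not (s := C) (a ∈ ·)
  have h₁ := card_le_card_shatterer (C.filter (a ∈ ·))
  have h₀ := card_le_card_shatterer (C.filter (a ∉ ·))
  have hcount := card_shatterer_filter_mem_add_card_shatterer_filter_notMem_le C a
  have hC' := isAmple_iff_card_shatterer_le.1 hC
  rw [isAmple_iff_card_shatterer_le]
  by_cases hp : p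
  · simp only [hp, iff_true]
    omega
  · simp only [hp, iff_false]
    omega

theorem compression (hC : IsAmple C) (a : X) : IsAmple (𝓓 a C) := by
  rw [isAmple_iff_card_shatterer_le, Down.card_compression]
  exact (card_le_card (shatterer_compress_subset_shatterer a C)).trans
    (isAmple_iff_card_shatterer_le.1 hC)

theorem exists_symmDiff_singleton_mem (hC : IsAmple C) {t t' : Finset X} (ht : t ∈ C)
    (ht' : t' ∈ C) (hne : t ≠ t') : ∃ x, t ∆ {x} ∈ C := by
  induction C using Finset.strongInduction generalizing t' with
  | H C ih =>
  by_cases hpair : C ⊆ {t, t'}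
  · have hlt := card_symmDiff_lt_card_shatterer ht ht'
    have h2 := (isAmple_iff_card_shatterer_le.1 hC).trans
      ((card_le_card hpair).trans card_le_two)
    obtain ⟨x, hx⟩ := card_eq_one.1 (le_antisymm (by omega)
      (card_pos.2 (nonempty_iff_ne_empty.2 (symmDiff_eq_empty.not.2 hne))))
    exact ⟨x, by rwa [← hx, symmDiff_symmDiff_cancel_left]⟩
  -- A third concept `d` is separated from `t'` by some `y`; the half of `C` agreeing with `t`
  -- at `y` keeps `t` and exactly one of `d`, `t'`.
  obtain ⟨d, hd, hdtt'⟩ := not_subset.1 hpair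
  simp only [mem_insert, mem_singleton, not_or] at hdtt'
  obtain ⟨y, hy⟩ := nonempty_iff_ne_empty.2 (symmDiff_eq_empty.not.2 hdtt'.2)
  set H := C.filter (fun c ↦ y ∈ c ↔ y ∈ t)
  have descend : ∀ e ∈ H, e ≠ t → ∀ f ∈ C, f ∉ H → ∃ x, t ∆ {x} ∈ C := by
    intro e he het f hf hfH
    obtain ⟨x, hx⟩ := ih H (filter_ssubset.2 ⟨f, hf, by simpa [H, hf] using hfH⟩)
      (hC.filter_mem_iff y _) (mem_filter.2 ⟨ht, Iff.rfl⟩) he het.symm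
    exact ⟨x, filter_subset _ _ hx⟩
  rw [mem_symmDiff] at hy
  by_cases hdy : y ∈ d ↔ y ∈ t
  · refine descend d (mem_filter.2 ⟨hd, hdy⟩) hdtt'.1 t' ht' ?_
    simp only [H, mem_filter, not_and]
    tauto
  · refine descend t' (mem_filter.2 ⟨ht', by tauto⟩) hne.symm d hd ?_
    simp only [H, mem_filter, not_and]
    tauto

end IsAmple

section Cubes

variable {α : Type} [DecidableEq α] {C B : Finset (Finset α)} {Y c d : Finset α} {a x : α}

theorem mem_cubeAt : d ∈ cubeAt c Y ↔ d \ Y = c \ Y := by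
  simp only [cubeAt, mem_image, mem_powerset]
  constructor
  · rintro ⟨s, hs, rfl⟩
    rw [union_sdiff_distrib, _root_.sdiff_idem, sdiff_eq_empty_iff_subset.2 hs, union_empty]
  · intro h
    exact ⟨d ∩ Y, inter_subset_right, by rw [← h, sdiff_union_inter]⟩

theorem mem_cubeAt_self : c ∈ cubeAt c Y := mem_cubeAt.2 rfl

theorem cubeAt_subset_iff : cubeAt c Y ⊆ C ↔ ∀ d, d \ Y = c \ Y → d ∈ C := by
  simp only [subset_iff, mem_cubeAt]

theorem cubeAt_union_self : cubeAt (c ∪ Y) Y = cubeAt c Y := by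
  ext d
  rw [mem_cubeAt, mem_cubeAt, union_sdiff_right]

theorem isCubeS_iff : IsCubeS B Y ↔ ∃ c, B = cubeAt c Y := by
  constructor
  · rintro ⟨t, ht, rfl⟩
    refine ⟨t, ?_⟩
    rw [cubeAt, sdiff_eq_self_of_disjoint (disjoint_iff_inter_eq_empty.2 ht)]
  · rintro ⟨c, rfl⟩
    exact ⟨c \ Y, sdiff_inter_self _ _, rfl⟩

theorem cubeAt_ssubset_cubeAt_insert (hx : x ∉ Y) : cubeAt c Y ⊂ cubeAt c (insert x Y) := by
  refine ssubset_iff_of_subset (fun d hd ↦ ?_) |>.2 ⟨c ∆ {x}, ?_, ?_⟩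
  · rw [mem_cubeAt] at hd ⊢
    ext z
    have := Finset.ext_iff.1 hd z
    simp only [mem_sdiff, mem_insert] at this ⊢
    tauto
  all_goals simp only [mem_cubeAt, Finset.ext_iff, mem_sdiff, mem_symmDiff, mem_insert,
    mem_singleton]
  · grind
  · exact fun h ↦ by have := h x; tauto

theorem cubeAt_insert_subset (h : cubeAt c Y ⊆ C) (h' : cubeAt (c ∆ {x}) Y ⊆ C) :
    cubeAt c (insert x Y) ⊆ C := by
  intro d hd
  rw [mem_cubeAt] at hd
  by_cases hdx : x ∈ d ↔ x ∈ c
  · refine h (mem_cubeAt.2 ?_)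
    ext z
    have := Finset.ext_iff.1 hd z
    simp only [mem_sdiff, mem_insert] at this ⊢
    grind
  · refine h' (mem_cubeAt.2 ?_)
    ext z
    have := Finset.ext_iff.1 hd z
    simp only [mem_sdiff, mem_insert, mem_symmDiff, mem_singleton] at this ⊢
    grind

theorem IsMaximalCubeOf.not_cubeAt_insert_subset (hc : IsMaximalCubeOf C (cubeAt c Y))
    (hx : x ∉ Y) : ¬ cubeAt c (insert x Y) ⊆ C := fun h ↦
  (cubeAt_ssubset_cubeAt_insert hx).ne <|
    hc.2 _ ⟨h, insert x Y, isCubeS_iff.2 ⟨c, rfl⟩⟩ (cubeAt_ssubset_cubeAt_insert hx).subset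

/-- The paper's reduction `C^Y` collects the bases of the `Y`-cubes of `C`; we take their tops,
which makes `C^{a}` the upper half of the down-compression `𝓓 a C`. -/
def cubeTops (C : Finset (Finset α)) (Y : Finset α) : Finset (Finset α) :=
  C.filter (fun c ↦ Y ⊆ c ∧ cubeAt c Y ⊆ C)

theorem mem_cubeTops : c ∈ cubeTops C Y ↔ Y ⊆ c ∧ cubeAt c Y ⊆ C := by
  rw [cubeTops, mem_filter, and_iff_right_iff_imp]
  exact fun h ↦ h.2 mem_cubeAt_self

theorem union_mem_cubeTops (h : cubeAt c Y ⊆ C) : c ∪ Y ∈ cubeTops C Y :=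
  mem_cubeTops.2 ⟨subset_union_right, by rwa [cubeAt_union_self]⟩

theorem cubeTops_empty (C : Finset (Finset α)) : cubeTops C ∅ = C := by
  ext c
  simp only [mem_cubeTops, empty_subset, true_and, cubeAt_subset_iff, sdiff_empty]
  exact ⟨fun h ↦ h c rfl, fun h d hd ↦ hd ▸ h⟩

theorem mem_cubeTops_singleton : c ∈ cubeTops C {a} ↔ c ∈ C ∧ a ∈ c ∧ c.erase a ∈ C := by
  simp only [mem_cubeTops, singleton_subset_iff, cubeAt_subset_iff, sdiff_singleton_eq_erase]
  constructor
  · rintro ⟨ha, h⟩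
    exact ⟨h c rfl, ha, h _ erase_idem⟩
  · rintro ⟨hc, ha, hc'⟩
    refine ⟨ha, fun d hd ↦ ?_⟩
    by_cases hda : a ∈ d
    · rwa [← insert_erase hda, hd, insert_erase ha]
    · rwa [← erase_eq_of_notMem hda, hd]

theorem filter_mem_compression (a : α) (C : Finset (Finset α)) :
    (𝓓 a C).filter (a ∈ ·) = cubeTops C {a} := by
  ext s
  rw [mem_filter, Down.mem_compression, mem_cubeTops_singleton]
  by_cases ha : a ∈ s
  · simp [ha, insert_eq_of_mem ha]
  · simp [ha]

theorem cubeTops_insert (ha : a ∉ Y) (C : Finset (Finset α)) :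
    cubeTops C (insert a Y) = cubeTops (cubeTops C {a}) Y := by
  ext c
  rw [mem_cubeTops, mem_cubeTops, insert_subset_iff, cubeAt_subset_iff, cubeAt_subset_iff]
  simp only [mem_cubeTops_singleton]
  constructor
  · rintro ⟨⟨hac, hYc⟩, h⟩
    refine ⟨hYc, fun d hd ↦ ⟨h d ?_, ?_, h _ ?_⟩⟩
    · rw [sdiff_insert, sdiff_insert, hd]
    · exact (mem_sdiff.1 (hd ▸ mem_sdiff.2 ⟨hac, ha⟩)).1
    · rw [erase_sdiff_comm, sdiff_insert, sdiff_insert, hd, erase_idem]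
  · rintro ⟨hYc, h⟩
    refine ⟨⟨(h c rfl).2.1, hYc⟩, fun d hd ↦ ?_⟩
    have hd' : insert a d \ Y = c \ Y := by
      ext z
      have := Finset.ext_iff.1 hd z
      simp only [mem_sdiff, mem_insert] at this ⊢
      grind
    obtain ⟨hd₁, -, hd₂⟩ := h (insert a d) hd'
    by_cases hda : a ∈ d
    · rwa [insert_eq_of_mem hda] at hd₁
    · rwa [erase_insert hda] at hd₂

end Cubes

theorem IsAmple.cubeTops {C : Finset (Finset X)} (hC : IsAmple C) (Y : Finset X) :
    IsAmple (cubeTops C Y) := by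
  induction Y using Finset.induction_on generalizing C with
  | empty => rwa [cubeTops_empty]
  | insert a Y ha ih =>
    rw [cubeTops_insert ha]
    refine ih ?_
    rw [← filter_mem_compression]
    simpa using (hC.compression a).filter_mem_iff a True

/-- Two maximal cubes of an ample class with the same support are equal. -/
theorem stmt_1 (C B B' : Finset (Finset X)) (Y : Finset X) (hC : IsAmple C)
    (hB : IsMaximalCubeOf C B) (hB' : IsMaximalCubeOf C B')
    (hBY : IsCubeS B Y) (hB'Y : IsCubeS B' Y) : B = B' := by
  obtain ⟨t, rfl⟩ := isCubeS_iff.1 hBY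
  obtain ⟨t', rfl⟩ := isCubeS_iff.1 hB'Y
  by_contra hne
  have hT := union_mem_cubeTops hB.1.1
  have hne' : t ∪ Y ≠ t' ∪ Y := fun h ↦ hne (by rw [← cubeAt_union_self, h, cubeAt_union_self])
  obtain ⟨x, hx⟩ := (hC.cubeTops Y).exists_symmDiff_singleton_mem hT
    (union_mem_cubeTops hB'.1.1) hne'
  rw [mem_cubeTops] at hT hx
  have hxY : x ∉ Y := fun hxY ↦ by simpa [mem_symmDiff, hxY] using hx.1 hxY
  rw [← cubeAt_union_self] at hB
  exact hB.not_cubeAt_insert_subset hxY (cubeAt_insert_subset hT.2 hx.2)
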